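/- Suppose the N×N infection rate matrix B is symmetric and irreducible with nonnegative entries, the curing rate matrix S = diag(δ_1,...,δ_N) has positive diagonal, and V ⊆ ℝ^N is an m-dimensional linear subspace that is an invariant set of NIMFA and satisfies S v ∈ V for every v ∈ V. Then there exists an orthonormal basis x_1,...,x_N of ℝ^N consisting of eigenvectors of B such that V = span{x_1,...,x_m} and the orthogonal complement V⊥ = span{x_{m+1},...,x_N}; in particular B V ⊆ V and B V⊥ ⊆ V⊥. -/

import Mathlib

/-!
The NIMFA field `f` is quadratic, so `f v - f (-v) = 2 (B v - S v)`; with `S V ⊆ V` this gives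
`B V ⊆ V`. As `B` is symmetric, `V⊥` is `B`-invariant as well, and the spectral theorem applied to
`B` restricted to `V` and to `V⊥` gives two orthonormal eigenbases whose concatenation is the
required basis of `ℝ^N`.
-/

open Matrix Finset

/-- A nonnegative square matrix is irreducible if its associated directed graph
(with an edge from `i` to `j` whenever `B i j > 0`) is strongly connected. -/
def MatIrreducible {N : ℕ} (B : Matrix (Fin N) (Fin N) ℝ) : Prop :=
  ∀ i j : Fin N, Relation.ReflTransGen (fun a b => 0 < B a b) i j

open Module Submodule

-- `-S v + diag(u - v) B v` with `S = diag δ`.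
def nimfaField {ι K : Type*} [Fintype ι] [CommRing K] (B : Matrix ι ι K) (δ v : ι → K) : ι → K :=
  fun i => -δ i * v i + (1 - v i) * (B *ᵥ v) i

theorem mulVec_mem_of_nimfaField_mem {ι K : Type*} [Fintype ι] [Field K] [NeZero (2 : K)]
    {B : Matrix ι ι K} {δ : ι → K} {V : Submodule K (ι → K)}
    (hSV : ∀ v ∈ V, (fun i => δ i * v i) ∈ V) (hinv : ∀ v ∈ V, nimfaField B δ v ∈ V)
    {v : ι → K} (hv : v ∈ V) : B *ᵥ v ∈ V := by
  have hBv :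
      B *ᵥ v = (2 : K)⁻¹ • (nimfaField B δ v - nimfaField B δ (-v)) + fun i => δ i * v i := by
    ext i
    simp only [nimfaField, mulVec_neg, Pi.add_apply, Pi.smul_apply, Pi.sub_apply, Pi.neg_apply,
      smul_eq_mul]
    field_simp
    ring
  rw [hBv]
  exact V.add_mem (V.smul_mem _ (V.sub_mem (hinv v hv) (hinv _ (V.neg_mem hv)))) (hSV v hv)

theorem Matrix.IsSymm.mulVec_dotProduct {n R : Type*} [Fintype n] [CommSemiring R]
    {B : Matrix n n R} (hB : B.IsSymm) (w v : n → R) : B *ᵥ w ⬝ᵥ v = w ⬝ᵥ B *ᵥ v := by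
  rw [dotProduct_mulVec, ← vecMul_transpose, hB.eq]

theorem Orthonormal.finAppend {𝕜 E : Type*} [RCLike 𝕜] [SeminormedAddCommGroup E]
    [InnerProductSpace 𝕜 E] {m n : ℕ} {x : Fin m → E} {y : Fin n → E} (hx : Orthonormal 𝕜 x)
    (hy : Orthonormal 𝕜 y) (hxy : ∀ i j, inner 𝕜 (x i) (y j) = 0) :
    Orthonormal 𝕜 (Fin.append x y) := by
  rw [orthonormal_iff_ite] at hx hy ⊢
  intro k l
  induction k using Fin.addCases <;> induction l using Fin.addCases <;>
    simp [hx, hy, hxy, inner_eq_zero_symm.mp (hxy _ _), Fin.ext_iff] <;> omega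

namespace LinearMap.IsSymmetric

variable {𝕜 E : Type*} [RCLike 𝕜] [NormedAddCommGroup E] [InnerProductSpace 𝕜 E]
  {T : E →ₗ[𝕜] E} {W : Submodule 𝕜 E}

theorem orthogonal_invariant (hT : T.IsSymmetric) (hW : ∀ w ∈ W, T w ∈ W) :
    ∀ w ∈ Wᗮ, T w ∈ Wᗮ := fun w hw u hu => by
  rw [← hT u w]
  exact hw _ (hW u hu)

variable [FiniteDimensional 𝕜 E]

theorem exists_orthonormal_eigenvectors_span_eq (hT : T.IsSymmetric) (hW : ∀ w ∈ W, T w ∈ W)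
    {n : ℕ} (hn : finrank 𝕜 W = n) :
    ∃ (x : Fin n → E) (μ : Fin n → ℝ), Orthonormal 𝕜 x ∧ (∀ i, T (x i) = (μ i : 𝕜) • x i) ∧
      span 𝕜 (Set.range x) = W := by
  have hTW := hT.restrict_invariant hW
  let b := hTW.eigenvectorBasis hn
  refine ⟨fun i => b i, hTW.eigenvalues hn, b.orthonormal.comp_linearIsometry W.subtypeₗᵢ,
    fun i => congrArg Subtype.val (hTW.apply_eigenvectorBasis hn i), ?_⟩
  have hb : span 𝕜 (Set.range b) = ⊤ := b.toBasis.span_eq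
  rw [show Set.range (fun i => (b i : E)) = W.subtype '' Set.range b from Set.range_comp _ _,
    span_image, hb, Submodule.map_top, range_subtype]

theorem exists_orthonormal_eigenvectors_adapted (hT : T.IsSymmetric) (hW : ∀ w ∈ W, T w ∈ W)
    {m n : ℕ} (hm : finrank 𝕜 W = m) (hn : finrank 𝕜 Wᗮ = n) :
    ∃ (x : Fin (m + n) → E) (μ : Fin (m + n) → ℝ), Orthonormal 𝕜 x ∧
      (∀ k, T (x k) = (μ k : 𝕜) • x k) ∧
      span 𝕜 (x '' {k | (k : ℕ) < m}) = W ∧ span 𝕜 (x '' {k | m ≤ (k : ℕ)}) = Wᗮ := by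
  obtain ⟨x₁, μ₁, hx₁, hμ₁, hspan₁⟩ := hT.exists_orthonormal_eigenvectors_span_eq hW hm
  obtain ⟨x₂, μ₂, hx₂, hμ₂, hspan₂⟩ :=
    hT.exists_orthonormal_eigenvectors_span_eq (hT.orthogonal_invariant hW) hn
  have hx₁W : ∀ i, x₁ i ∈ W := fun i => hspan₁ ▸ subset_span (Set.mem_range_self i)
  have hx₂W : ∀ j, x₂ j ∈ Wᗮ := fun j => hspan₂ ▸ subset_span (Set.mem_range_self j)
  have hlow : {k : Fin (m + n) | (k : ℕ) < m} = Set.range (Fin.castAdd n) := by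
    ext k
    exact ⟨fun hk => ⟨⟨k, hk⟩, rfl⟩, by rintro ⟨i, rfl⟩; exact i.2⟩
  refine ⟨Fin.append x₁ x₂, Fin.append μ₁ μ₂,
    hx₁.finAppend hx₂ fun i j => inner_right_of_mem_orthogonal (hx₁W i) (hx₂W j), ?_, ?_, ?_⟩
  · intro k
    induction k using Fin.addCases <;> simp [hμ₁, hμ₂]
  · simpa [hlow, ← Set.range_comp, Function.comp_def] using hspan₁
  · simpa [← Fin.range_natAdd, ← Set.range_comp, Function.comp_def] using hspan₂

end LinearMap.IsSymmetric

theorem Matrix.IsSymm.exists_orthonormal_eigenvectors_adapted {m n : ℕ}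
    {B : Matrix (Fin (m + n)) (Fin (m + n)) ℝ} (hB : B.IsSymm)
    {V : Submodule ℝ (Fin (m + n) → ℝ)} (hV : finrank ℝ V = m) (hBV : ∀ v ∈ V, B *ᵥ v ∈ V) :
    ∃ (x : Fin (m + n) → Fin (m + n) → ℝ) (μ : Fin (m + n) → ℝ),
      (∀ k l, x k ⬝ᵥ x l = if k = l then 1 else 0) ∧ (∀ k, B *ᵥ x k = μ k • x k) ∧
      V = span ℝ (x '' {k | (k : ℕ) < m}) ∧
      ∀ w, w ∈ span ℝ (x '' {k | m ≤ (k : ℕ)}) ↔ ∀ v ∈ V, w ⬝ᵥ v = 0 := by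
  let e := WithLp.linearEquiv 2 ℝ (Fin (m + n) → ℝ)
  let W := V.comap e.toLinearMap
  have hT : (toEuclideanLin B).IsSymmetric :=
    isSymmetric_toEuclideanLin_iff.mpr (isHermitian_iff_isSymm.mpr hB)
  have hWV : W.map e.toLinearMap = V :=
    map_comap_eq_of_surjective e.surjective V
  have hm : finrank ℝ W = m := by rw [← LinearEquiv.finrank_map_eq e W, hWV, hV]
  have hn : finrank ℝ Wᗮ = n := by
    have h := W.finrank_add_finrank_orthogonal
    rw [finrank_euclideanSpace_fin, hm] at h
    omega
  obtain ⟨y, μ, hy, hμ, hyW, hyW_perp⟩ :=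
    hT.exists_orthonormal_eigenvectors_adapted (fun w hw => hBV _ hw) hm hn
  have hspan : ∀ s, span ℝ ((fun k => (y k).ofLp) '' s) = (span ℝ (y '' s)).map e.toLinearMap :=
    fun s => by rw [← span_image, Set.image_image]; rfl
  refine ⟨fun k => (y k).ofLp, μ, fun k l => ?_, fun k => congrArg WithLp.ofLp (hμ k), ?_,
    fun w => ?_⟩
  · rw [← orthonormal_iff_ite.mp hy k l, EuclideanSpace.inner_eq_star_dotProduct, dotProduct_comm]
    rfl
  · rw [hspan, hyW, hWV]
  · rw [hspan, hyW_perp, Submodule.mem_map_equiv, Submodule.mem_orthogonal']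
    refine ⟨fun h v hv => ?_, fun h u hu => ?_⟩
    · simpa [e, EuclideanSpace.inner_eq_star_dotProduct, dotProduct_comm] using
        h (WithLp.toLp 2 v) hv
    · simpa [e, EuclideanSpace.inner_eq_star_dotProduct, dotProduct_comm] using h _ hu

theorem nimfa_invariant_set_eigenvector_basis_general
    {N m : ℕ} (B : Matrix (Fin N) (Fin N) ℝ) (δ : Fin N → ℝ)
    (hB_symm : B.IsSymm)
    (V : Submodule ℝ (Fin N → ℝ))
    (hdim : Module.finrank ℝ V = m)
    (hSV : ∀ v ∈ V, (fun i => δ i * v i) ∈ V)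
    (hinv : ∀ v ∈ V, (fun i => -δ i * v i + (1 - v i) * ∑ j, B i j * v j) ∈ V) :
    ∃ (x : Fin N → (Fin N → ℝ)) (μ : Fin N → ℝ),
      (∀ k l : Fin N, x k ⬝ᵥ x l = if k = l then 1 else 0) ∧
      (∀ k : Fin N, B.mulVec (x k) = μ k • x k) ∧
      V = Submodule.span ℝ (x '' {k : Fin N | (k : ℕ) < m}) ∧
      (∀ w : Fin N → ℝ,
        w ∈ Submodule.span ℝ (x '' {k : Fin N | m ≤ (k : ℕ)}) ↔ ∀ v ∈ V, w ⬝ᵥ v = 0) ∧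
      (∀ v ∈ V, B.mulVec v ∈ V) ∧
      (∀ w : Fin N → ℝ, (∀ v ∈ V, w ⬝ᵥ v = 0) → ∀ v ∈ V, B.mulVec w ⬝ᵥ v = 0) := by
  have hBV : ∀ v ∈ V, B *ᵥ v ∈ V := fun v => mulVec_mem_of_nimfaField_mem hSV hinv
  obtain ⟨n, rfl⟩ : ∃ n, N = m + n :=
    Nat.exists_eq_add_of_le (hdim ▸ V.finrank_le.trans_eq (finrank_fin_fun ℝ))
  obtain ⟨x, μ, hx, hμ, hV, hV_perp⟩ := hB_symm.exists_orthonormal_eigenvectors_adapted hdim hBV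
  refine ⟨x, μ, hx, hμ, hV, hV_perp, hBV, fun w hw v hv => ?_⟩
  rw [hB_symm.mulVec_dotProduct]
  exact hw _ (hBV v hv)

/-- **Lemma 1.** If `B` is symmetric, irreducible and nonnegative, `S = diag(δ)`
has positive diagonal, and `V` is an `m`-dimensional invariant set of NIMFA with `S V ⊆ V`,
then there is an orthonormal basis `x_1,...,x_N` of eigenvectors of `B` such that
`V = span{x_1,...,x_m}` and `V⊥ = span{x_{m+1},...,x_N}`; in particular `B V ⊆ V` and
`B V⊥ ⊆ V⊥`. -/
theorem nimfa_invariant_set_eigenvector_basis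
    {N m : ℕ} (B : Matrix (Fin N) (Fin N) ℝ) (δ : Fin N → ℝ)
    (hB_symm : B.IsSymm)
    (hB_irr : MatIrreducible B)
    (hB_nonneg : ∀ i j, 0 ≤ B i j)
    (hδ_pos : ∀ i, 0 < δ i)
    (V : Submodule ℝ (Fin N → ℝ))
    (hdim : Module.finrank ℝ V = m)
    (hSV : ∀ v ∈ V, (fun i => δ i * v i) ∈ V)
    (hinv : ∀ v ∈ V, (fun i => -δ i * v i + (1 - v i) * ∑ j, B i j * v j) ∈ V) :
    ∃ (x : Fin N → (Fin N → ℝ)) (μ : Fin N → ℝ),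
      (∀ k l : Fin N, x k ⬝ᵥ x l = if k = l then 1 else 0) ∧
      (∀ k : Fin N, B.mulVec (x k) = μ k • x k) ∧
      V = Submodule.span ℝ (x '' {k : Fin N | (k : ℕ) < m}) ∧
      (∀ w : Fin N → ℝ,
        w ∈ Submodule.span ℝ (x '' {k : Fin N | m ≤ (k : ℕ)}) ↔ ∀ v ∈ V, w ⬝ᵥ v = 0) ∧
      (∀ v ∈ V, B.mulVec v ∈ V) ∧
      (∀ w : Fin N → ℝ, (∀ v ∈ V, w ⬝ᵥ v = 0) → ∀ v ∈ V, B.mulVec w ⬝ᵥ v = 0) :=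
  nimfa_invariant_set_eigenvector_basis_general B δ hB_symm V hdim hSV hinv
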